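/- The set S⁰ = {(s,t,u) ∈ ℝ³ : 0 < s < 1, 0 < u, u < t, t < 1 − u, (1−t)² − su > 0, t² − (1−s)u > 0, (1−2s)(1−2t+tu−su) = 0} is a connected subset of ℝ³. -/

import Mathlib

/-!
`S⁰` is the union of the two sheets `s = 1/2` and `s u = 1 - 2t + tu`, which meet at
`(1/2, 1/2, 1/4)`. Each sheet is a graph over a region of the `(t, u)`-plane lying strictly
between two continuous graphs over an interval, and such a region is a continuous image of the
interval times `(0, 1)`. On the plane `s = 1/2` the region is `0 < u < 2 min(t, 1 - t)²`. On the
other sheet `s = (1 - 2t + tu) / u`, the two quadratic inequalities become `t (t - u) > 0` and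
`(1 - t)(1 - t - u) > 0`, and `0 < s < 1` becomes `max(2 - 1/t, 2 - 1/(1 - t)) < u`; together with
`u < min(t, 1 - t)` this is a nonempty range of `u` exactly when `1 - φ⁻¹ < t < φ⁻¹`.
-/

/-- The semialgebraic set S⁰, with coordinates (s, t, u) ∈ ℝ³. -/
def Szero : Set (ℝ × ℝ × ℝ) :=
  {p | 0 < p.1 ∧ p.1 < 1 ∧ 0 < p.2.2 ∧ p.2.2 < p.2.1 ∧ p.2.1 < 1 - p.2.2 ∧
    (1 - p.2.1) ^ 2 - p.1 * p.2.2 > 0 ∧ p.2.1 ^ 2 - (1 - p.1) * p.2.2 > 0 ∧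
    (1 - 2 * p.1) * (1 - 2 * p.2.1 + p.2.1 * p.2.2 - p.1 * p.2.2) = 0}

open Set Real goldenRatio

section BetweenGraphs

variable {X : Type*} [TopologicalSpace X]

def betweenGraphs (I : Set X) (f g : X → ℝ) : Set (X × ℝ) :=
  {p | p.1 ∈ I ∧ f p.1 < p.2 ∧ p.2 < g p.1}

theorem isConnected_betweenGraphs {I : Set X} (hI : IsConnected I) {f g : X → ℝ}
    (hf : ContinuousOn f I) (hg : ContinuousOn g I) (hfg : ∀ x ∈ I, f x < g x) :
    IsConnected (betweenGraphs I f g) := by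
  have himage : (fun p : X × ℝ => (p.1, f p.1 + p.2 * (g p.1 - f p.1))) '' (I ×ˢ Ioo 0 1) =
      betweenGraphs I f g := by
    ext ⟨x, u⟩
    constructor
    · rintro ⟨⟨x, r⟩, ⟨hx, hr0, hr1⟩, ⟨⟩⟩
      have hgap := sub_pos.2 (hfg x hx)
      exact ⟨hx, by nlinarith, by nlinarith⟩
    · rintro ⟨hx, hfu, hug⟩
      have hgap := sub_pos.2 (hfg x hx)
      refine ⟨(x, (u - f x) / (g x - f x)), ⟨hx, div_pos (by linarith) hgap, ?_⟩, ?_⟩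
      · exact (div_lt_one hgap).2 (by linarith)
      · simp only [div_mul_cancel₀ _ hgap.ne']
        ring_nf
  rw [← himage]
  refine (hI.prod (isConnected_Ioo zero_lt_one)).image _ ?_
  have hf' : ContinuousOn (fun p : X × ℝ => f p.1) (I ×ˢ Ioo 0 1) :=
    hf.comp continuousOn_fst fun _ hp => hp.1
  have hg' : ContinuousOn (fun p : X × ℝ => g p.1) (I ×ˢ Ioo 0 1) :=
    hg.comp continuousOn_fst fun _ hp => hp.1
  exact continuousOn_fst.prodMk (hf'.add (continuousOn_snd.mul (hg'.sub hf')))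

end BetweenGraphs

theorem two_sub_inv_lt_iff {x u : ℝ} (hx : 0 < x) : 2 - x⁻¹ < u ↔ 2 * x - 1 < x * u := by
  rw [← mul_lt_mul_iff_right₀ hx, mul_sub, mul_inv_cancel₀ hx.ne']
  ring_nf

theorem sq_add_self_lt_one_iff {x : ℝ} (hx : 0 < x) : x ^ 2 + x < 1 ↔ x < φ⁻¹ := by
  have hfactor : x ^ 2 + x - 1 = (x - φ⁻¹) * (x + φ) := by
    rw [inv_goldenRatio]
    linear_combination x * goldenRatio_add_goldenConj - goldenRatio_mul_goldenConj
  have hpos : 0 < x + φ := by linarith [goldenRatio_pos]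
  rw [← sub_neg, hfactor, ← zero_mul (x + φ), mul_lt_mul_iff_left₀ hpos, sub_neg]

theorem Ioo_one_sub_inv_goldenRatio_subset : Ioo (1 - φ⁻¹) φ⁻¹ ⊆ Ioo 0 1 := by
  have h : φ⁻¹ < 1 := inv_lt_one_of_one_lt₀ one_lt_goldenRatio
  exact Ioo_subset_Ioo (by linarith) h.le

def planeRegion : Set (ℝ × ℝ) := betweenGraphs (Ioo 0 1) 0 fun t => 2 * min t (1 - t) ^ 2

theorem half_mem_Szero_iff {t u : ℝ} :
    ((1 / 2 : ℝ), t, u) ∈ Szero ↔ (t, u) ∈ planeRegion := by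
  simp only [Szero, planeRegion, betweenGraphs, mem_ofPred_eq, mem_Ioo, Pi.zero_apply]
  rcases le_total t (1 - t) with h | h
  · rw [min_eq_left h]
    constructor
    · rintro ⟨-, -, hu, hut, htu, -, hsq, -⟩
      exact ⟨⟨by linarith, by linarith⟩, hu, by linarith⟩
    · rintro ⟨⟨ht0, ht1⟩, hu, hut⟩
      refine ⟨by norm_num, by norm_num, hu, ?_, ?_, ?_, ?_, by norm_num⟩ <;> nlinarith
  · rw [min_eq_right h]
    constructor
    · rintro ⟨-, -, hu, hut, htu, hsq, -, -⟩
      exact ⟨⟨by linarith, by linarith⟩, hu, by linarith⟩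
    · rintro ⟨⟨ht0, ht1⟩, hu, hut⟩
      refine ⟨by norm_num, by norm_num, hu, ?_, ?_, ?_, ?_, by norm_num⟩ <;> nlinarith

theorem isConnected_planeRegion : IsConnected planeRegion :=
  isConnected_betweenGraphs (isConnected_Ioo zero_lt_one) continuousOn_const
    (by fun_prop) fun t ⟨ht0, ht1⟩ => by
      have : 0 < 1 - t := sub_pos.2 ht1
      simp only [Pi.zero_apply]
      positivity

theorem Szero_inter_half :
    Szero ∩ {p | p.1 = 1 / 2} = (fun q : ℝ × ℝ => ((1 / 2 : ℝ), q)) '' planeRegion := by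
  ext ⟨s, t, u⟩
  constructor
  · rintro ⟨h, rfl : s = 1 / 2⟩
    exact ⟨(t, u), half_mem_Szero_iff.1 h, rfl⟩
  · rintro ⟨⟨t, u⟩, h, ⟨⟩⟩
    exact ⟨half_mem_Szero_iff.2 h, rfl⟩

noncomputable def surfaceLower (t : ℝ) : ℝ := max (2 - t⁻¹) (2 - (1 - t)⁻¹)

noncomputable def surfaceRegion : Set (ℝ × ℝ) :=
  betweenGraphs (Ioo (1 - φ⁻¹) φ⁻¹) surfaceLower fun t => min t (1 - t)

noncomputable def surfaceLift (q : ℝ × ℝ) : ℝ × ℝ × ℝ :=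
  ((1 - 2 * q.1 + q.1 * q.2) / q.2, q)

theorem surfaceLower_lt_iff {t u : ℝ} (ht0 : 0 < t) (ht1 : t < 1) :
    surfaceLower t < u ↔ 0 < 1 - 2 * t + t * u ∧ 1 - 2 * t + t * u < u := by
  rw [surfaceLower, max_lt_iff, two_sub_inv_lt_iff ht0, two_sub_inv_lt_iff (sub_pos.2 ht1)]
  constructor <;> rintro ⟨h₁, h₂⟩ <;> constructor <;> linarith

theorem surfaceLower_lt_min_iff {t : ℝ} (ht0 : 0 < t) (ht1 : t < 1) :
    surfaceLower t < min t (1 - t) ↔ t ∈ Ioo (1 - φ⁻¹) φ⁻¹ := by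
  have ht1' : 0 < 1 - t := sub_pos.2 ht1
  rw [lt_min_iff, surfaceLower_lt_iff ht0 ht1, surfaceLower_lt_iff ht0 ht1, mem_Ioo,
    sub_lt_comm, ← sq_add_self_lt_one_iff ht0, ← sq_add_self_lt_one_iff ht1']
  constructor
  · rintro ⟨⟨-, h₁⟩, h₂, -⟩
    constructor <;> nlinarith
  · rintro ⟨h₁, h₂⟩
    refine ⟨⟨by nlinarith, by nlinarith⟩, by nlinarith, by nlinarith⟩

theorem snd_pos_of_mem_surfaceRegion {q : ℝ × ℝ} (hq : q ∈ surfaceRegion) : 0 < q.2 := by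
  obtain ⟨ht0, ht1⟩ := Ioo_one_sub_inv_goldenRatio_subset hq.1
  obtain ⟨hc0, hcu⟩ := (surfaceLower_lt_iff ht0 ht1).1 hq.2.1
  exact hc0.trans hcu

theorem mem_Szero_iff_of_mul_eq {s t u : ℝ} (h : s * u = 1 - 2 * t + t * u) :
    (s, t, u) ∈ Szero ↔ (t, u) ∈ surfaceRegion := by
  simp only [Szero, surfaceRegion, betweenGraphs, mem_ofPred_eq]
  constructor
  · rintro ⟨hs0, hs1, hu0, hut, htu, -, -, -⟩
    have ht0 : 0 < t := hu0.trans hut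
    have ht1 : t < 1 := by linarith
    have hlower : surfaceLower t < u :=
      (surfaceLower_lt_iff ht0 ht1).2 ⟨h ▸ by positivity, h ▸ by nlinarith⟩
    have hupper : u < min t (1 - t) := lt_min hut (by linarith)
    exact ⟨(surfaceLower_lt_min_iff ht0 ht1).1 (hlower.trans hupper), hlower, hupper⟩
  · rintro ⟨htI, hlower, hupper⟩
    obtain ⟨hut, htu⟩ := lt_min_iff.1 hupper
    obtain ⟨ht0, ht1⟩ := Ioo_one_sub_inv_goldenRatio_subset htI
    obtain ⟨hsu0, hsu⟩ := h ▸ (surfaceLower_lt_iff ht0 ht1).1 hlower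
    have hu0 : 0 < u := hsu0.trans hsu
    refine ⟨by nlinarith, by nlinarith, hu0, hut, by linarith, by nlinarith, by nlinarith, ?_⟩
    rw [h, sub_self, mul_zero]

theorem Szero_inter_surface :
    Szero ∩ {p | 1 - 2 * p.2.1 + p.2.1 * p.2.2 - p.1 * p.2.2 = 0} =
      surfaceLift '' surfaceRegion := by
  ext ⟨s, t, u⟩
  constructor
  · rintro ⟨hS, hfactor : 1 - 2 * t + t * u - s * u = 0⟩
    have h : s * u = 1 - 2 * t + t * u := by linarith
    refine ⟨(t, u), (mem_Szero_iff_of_mul_eq h).1 hS, ?_⟩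
    simp only [surfaceLift, ← h, mul_div_cancel_right₀ _ hS.2.2.1.ne']
  · rintro ⟨⟨t, u⟩, hq, ⟨⟩⟩
    have h : (1 - 2 * t + t * u) / u * u = 1 - 2 * t + t * u :=
      div_mul_cancel₀ _ (snd_pos_of_mem_surfaceRegion hq).ne'
    refine ⟨(mem_Szero_iff_of_mul_eq h).2 hq, ?_⟩
    simp only [mem_ofPred_eq, h, sub_self]

theorem continuousOn_surfaceLift : ContinuousOn surfaceLift surfaceRegion := by
  have hu : ∀ q ∈ surfaceRegion, q.2 ≠ 0 := fun q hq => (snd_pos_of_mem_surfaceRegion hq).ne'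
  unfold surfaceLift
  fun_prop (disch := exact hu)

theorem isConnected_surfaceRegion : IsConnected surfaceRegion := by
  have hI := Ioo_one_sub_inv_goldenRatio_subset
  have hφ : (2 : ℝ)⁻¹ < φ⁻¹ := inv_strictAnti₀ goldenRatio_pos goldenRatio_lt_two
  refine isConnected_betweenGraphs (isConnected_Ioo (by linarith)) ?_ (by fun_prop) fun t ht => ?_
  · unfold surfaceLower
    fun_prop (disch := intro t ht; have := hI ht; simp only [mem_Ioo] at this; linarith)
  · obtain ⟨ht0, ht1⟩ := hI ht
    exact (surfaceLower_lt_min_iff ht0 ht1).2 ht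

/-- The set S⁰ is a connected subset of ℝ³. -/
theorem Szero_connected : IsConnected Szero := by
  have hcover : Szero ⊆
      {p | p.1 = 1 / 2} ∪ {p | 1 - 2 * p.2.1 + p.2.1 * p.2.2 - p.1 * p.2.2 = 0} :=
    fun p hp => (mul_eq_zero.1 hp.2.2.2.2.2.2.2).imp
      (fun h => show p.1 = 1 / 2 by linarith) id
  rw [← inter_eq_left.2 hcover, inter_union_distrib_left]
  refine IsConnected.union ⟨(1 / 2, 1 / 2, 1 / 4), by norm_num [Szero]⟩ ?_ ?_
  · rw [Szero_inter_half]
    exact isConnected_planeRegion.image _ (by fun_prop)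
  · rw [Szero_inter_surface]
    exact isConnected_surfaceRegion.image _ continuousOn_surfaceLift
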